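/- arXiv:1611.05325 — 7 statements merged into one kernel-verified Lean document; each statement's English description precedes it below -/
import Mathlib

section
/- Let (S,p) be a transition probability space. If R and R' are two bases of S and R is finite, then R' is also finite and R and R' have the same cardinality. -/
/-- A subset whose distinct elements are pairwise orthogonal (`p a b = 0`). -/
def IsOrthogonalSet {S : Type*} (p : S → S → ℝ) (R : Set S) : Prop :=
  ∀ a ∈ R, ∀ b ∈ R, a ≠ b → p a b = 0

/-- A basis: a maximal pairwise orthogonal subset. -/
def IsBasisTPS {S : Type*} (p : S → S → ℝ) (R : Set S) : Prop :=
  IsOrthogonalSet p R ∧ ∀ T : Set S, R ⊆ T → IsOrthogonalSet p T → T = R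

/-- A transition probability space. -/
def IsTPS {S : Type*} (p : S → S → ℝ) : Prop :=
  (∀ a b : S, 0 ≤ p a b) ∧ (∀ a b : S, p a b ≤ 1) ∧
  (∀ a b : S, p a b = 1 ↔ a = b) ∧
  (∀ a b : S, p a b = p b a) ∧
  (∀ R : Set S, IsBasisTPS p R → ∀ a : S, HasSum (fun r : R => p a r.1) 1)

/-- If `R` and `R'` are two bases of a transition probability space and `R` is finite,
then `R'` is also finite and they have the same cardinality. -/
theorem two_bases_same_card {S : Type*} (p : S → S → ℝ) (hTPS : IsTPS p)
    (R R' : Set S) (hR : IsBasisTPS p R) (hR' : IsBasisTPS p R')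
    (hfin : R.Finite) :
    R'.Finite ∧ R.ncard = R'.ncard := by
  obtain ⟨hpos, hle, hone, hsymm, hsum⟩ := hTPS
  haveI : Fintype R := hfin.fintype
  -- For each r' ∈ R', the sum over R of p r r' equals 1
  have key : ∀ r' : R', ∑ r : R, p r.1 r'.1 = 1 := by
    intro r'
    have h1 : HasSum (fun r : R => p r'.1 r.1) 1 := hsum R hR r'.1
    have h2 : HasSum (fun r : R => p r'.1 r.1) (∑ r : R, p r'.1 r.1) :=
      hasSum_fintype _
    have := h2.unique h1
    rw [← this]
    exact Finset.sum_congr rfl fun r _ => hsymm r.1 r'.1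
  -- Sum over R' of (sum over R) has sum (card R)
  have hbig : HasSum (fun r' : R' => ∑ r : R, p r.1 r'.1)
      ((Fintype.card R : ℝ)) := by
    have := hasSum_sum (s := (Finset.univ : Finset R))
      (f := fun r (r' : R') => p r.1 r'.1) (a := fun _ => (1 : ℝ))
      (fun r _ => hsum R' hR' r.1)
    simpa using this
  have hconst : HasSum (fun _ : R' => (1 : ℝ)) ((Fintype.card R : ℝ)) := by
    have : (fun r' : R' => ∑ r : R, p r.1 r'.1) = fun _ : R' => (1 : ℝ) :=
      funext fun r' => key r'
    rwa [this] at hbig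
  have hfin' : R'.Finite := by
    have := Finite.of_summable_const (ι := R') one_pos hconst.summable
    exact Set.toFinite R'
  haveI : Fintype R' := hfin'.fintype
  have hcard : (Fintype.card R' : ℝ) = (Fintype.card R : ℝ) := by
    have h2 : HasSum (fun _ : R' => (1 : ℝ)) (∑ _ : R', (1 : ℝ)) := hasSum_fintype _
    have := h2.unique hconst
    simpa using this
  refine ⟨hfin', ?_⟩
  have : Fintype.card R = Fintype.card R' := by exact_mod_cast hcard.symm
  rw [Set.ncard_eq_toFinset_card' , Set.ncard_eq_toFinset_card']
  simpa using this
end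

section
/- Let (S,p) be a transition probability space and T ⊆ S a subset such that (T, p restricted to T × T) is itself a transition probability space. Let R be a basis of (T, p restricted) and let x ∈ S satisfy p(x,r) = 0 for all r ∈ R. Then p(x,y) = 0 for every y ∈ T. -/
/-- If `T ⊆ S` is a subspace (i.e. `p` restricted to `T` is again a transition
probability space), `R` is a basis of the restricted space, and `x ∈ S` is
orthogonal to every element of `R`, then `x` is orthogonal to every element of `T`. -/
theorem orthogonal_to_basis_orthogonal_to_subspace {S : Type*} (p : S → S → ℝ)
    (hTPS : IsTPS p) (T : Set S)
    (hT : IsTPS (fun a b : T => p a.1 b.1))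
    (R : Set T) (hR : IsBasisTPS (fun a b : T => p a.1 b.1) R)
    (x : S) (hx : ∀ r ∈ R, p x r.1 = 0) :
    ∀ y ∈ T, p x y = 0 := by
  obtain ⟨hpos, hle1, hone, hsymm, hbasis⟩ := hTPS
  intro y hy
  -- the image of `R` in `S`
  set Rimg : Set S := Subtype.val '' R with hRimg
  have hxnotin : x ∉ Rimg := by
    rintro ⟨r, hr, rfl⟩
    have h0 := hx r hr
    have h1 : p (r : S) (r : S) = 1 := (hone _ _).2 rfl
    rw [h0] at h1; norm_num at h1
  -- `insert x Rimg` is an orthogonal set in `S`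
  have hR'orth : IsOrthogonalSet p (insert x Rimg) := by
    rintro a ha b hb hab
    rcases ha with rfl | ⟨r, hr, rfl⟩
    · rcases hb with rfl | ⟨s, hs, rfl⟩
      · exact absurd rfl hab
      · exact hx s hs
    · rcases hb with rfl | ⟨s, hs, rfl⟩
      · rw [hsymm]; exact hx r hr
      · exact hR.1 r hr s hs (fun h => hab (by rw [h]))
  -- extend it to a maximal orthogonal set (Zorn)
  obtain ⟨B, hRB, hBmax⟩ := zorn_subset_nonempty {A : Set S | IsOrthogonalSet p A}
    (fun c hc hchain _ => ⟨⋃₀ c, by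
      rintro a ⟨A, hA, haA⟩ b ⟨B, hB, hbB⟩ hab
      rcases hchain.total hA hB with h | h
      · exact hc hB a (h haA) b hbB hab
      · exact hc hA a haA b (h hbB) hab, fun s hs => Set.subset_sUnion_of_mem hs⟩)
    _ hR'orth
  have hBbasis : IsBasisTPS p B :=
    ⟨hBmax.1, fun T hT' horth => (hBmax.2 horth hT').antisymm hT'⟩
  -- the two sums
  have hsum2 : HasSum (fun b : B => p y b.1) 1 := hbasis B hBbasis y
  have hsum1 : HasSum (fun r : R => p y r.1.1) 1 := hT.2.2.2.2 R hR ⟨y, hy⟩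
  -- inject R into B
  have hRimgB : Rimg ⊆ B := fun a ha => hRB (Set.mem_insert_of_mem _ ha)
  set i : R → B := fun r => ⟨r.1.1, hRimgB ⟨r.1, r.2, rfl⟩⟩ with hi
  have hiinj : Function.Injective i := by
    intro a b hab
    have h1 : (i a).1 = (i b).1 := congrArg Subtype.val hab
    exact Subtype.ext (Subtype.ext h1)
  set g : B → ℝ := fun b => p y b.1 with hg
  have hsumA : HasSum (fun a : Set.range i => g a) 1 :=
    hiinj.hasSum_range_iff.2 hsum1
  have hsumCsummable : Summable (fun a : ((Set.range i)ᶜ : Set B) => g a) :=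
    hsum2.summable.subtype _
  obtain ⟨c, hsumC⟩ := hsumCsummable
  have htotal : HasSum g (1 + c) := hsumA.add_compl hsumC
  have hc0 : c = 0 := by
    have := htotal.unique hsum2; linarith
  -- x as an element of B, outside the range of i
  have hxB : x ∈ B := hRB (Set.mem_insert _ _)
  have hxnr : (⟨x, hxB⟩ : B) ∉ Set.range i := by
    rintro ⟨r, hr⟩
    exact hxnotin ⟨r.1, r.2, congrArg Subtype.val hr⟩
  have hle : g ⟨x, hxB⟩ ≤ c :=
    le_hasSum hsumC ⟨⟨x, hxB⟩, hxnr⟩ (fun j _ => hpos _ _)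
  have hge : 0 ≤ g ⟨x, hxB⟩ := hpos _ _
  have : p y x = 0 := by
    have : g ⟨x, hxB⟩ = 0 := le_antisymm (hc0 ▸ hle) hge
    simpa [hg] using this
  rw [hsymm]; exact this
end

section
/- Let (S,p) be a transition probability space and for B ⊆ S define the orthocomplement B^⊥ = {x ∈ S : p(x,b) = 0 for all b ∈ B}. Let A ⊆ S be orthoclosed, i.e. A = A^⊥⊥, and assume (A^⊥, p restricted) is a transition probability space. Then for every basis R of (A^⊥, p restricted), A = R^⊥ = {x ∈ S : p(x,r) = 0 for all r ∈ R}; that is, an orthoclosed subspace is the orthocomplement of any basis of its orthocomplement. -/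
/-- The orthocomplement `B^⊥ = {x ∈ S : p(x,b) = 0 for all b ∈ B}`. -/
def orthoC {S : Type*} (p : S → S → ℝ) (B : Set S) : Set S :=
  {x : S | ∀ b ∈ B, p x b = 0}

/-- Any orthogonal set extends to a basis (Zorn). -/
lemma exists_basis_extending {S : Type*} (p : S → S → ℝ) (R₀ : Set S)
    (h : IsOrthogonalSet p R₀) : ∃ R', R₀ ⊆ R' ∧ IsBasisTPS p R' := by
  obtain ⟨m, hm, hmax⟩ := zorn_subset_nonempty {T : Set S | IsOrthogonalSet p T}
    (fun c hc hchain _ => by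
      refine ⟨⋃₀ c, ?_, fun s hs => Set.subset_sUnion_of_mem hs⟩
      rintro a ⟨s, hs, has⟩ b ⟨t, ht, hbt⟩ hab
      rcases hchain.total hs ht with h' | h'
      · exact hc ht a (h' has) b hbt hab
      · exact hc hs a has b (h' hbt) hab) R₀ h
  exact ⟨m, hm, hmax.1, fun T hT hTo => le_antisymm (hmax.2 hTo hT) hT⟩

/-- An orthoclosed subspace `A = A^⊥⊥` is the orthocomplement of any basis `R`
of its orthocomplement `A^⊥`. -/
theorem orthoclosed_eq_orthocomplement_of_basis {S : Type*} (p : S → S → ℝ)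
    (hTPS : IsTPS p) (A : Set S)
    (hA : A = orthoC p (orthoC p A))
    (hsub : IsTPS (fun a b : orthoC p A => p a.1 b.1))
    (R : Set (orthoC p A))
    (hR : IsBasisTPS (fun a b : orthoC p A => p a.1 b.1) R) :
    A = {x : S | ∀ r ∈ R, p x r.1 = 0} := by
  classical
  obtain ⟨hnn, hle1, heq1, hsymm, hsum⟩ := hTPS
  -- image of R in S
  set R₀ : Set S := Subtype.val '' R with hR₀def
  have hR₀orth : IsOrthogonalSet p R₀ := by
    rintro a ⟨a', ha', rfl⟩ b ⟨b', hb', rfl⟩ hab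
    exact hR.1 a' ha' b' hb' (fun h => hab (by rw [h]))
  obtain ⟨R', hsubR', hR'⟩ := exists_basis_extending p R₀ hR₀orth
  set C : Set S := R' \ R₀ with hCdef
  have hdisj : Disjoint R₀ C := Set.disjoint_sdiff_right
  have hunion : R' = R₀ ∪ C := (Set.union_diff_cancel hsubR').symm
  -- For any z : sums over R' and R₀ as indicator sums
  have hindR' : ∀ z : S, HasSum (R'.indicator (p z)) 1 := fun z =>
    hasSum_subtype_iff_indicator.mp (hsum R' hR' z)
  -- sum over R₀ equals sum over R
  have hsumR₀ : ∀ b : orthoC p A, HasSum (R₀.indicator (p b.1)) 1 := by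
    intro b
    let e : R ≃ R₀ := Equiv.Set.image Subtype.val R Subtype.val_injective
    have h0 := hsub.2.2.2.2 R hR b
    have hco : ((fun r : R₀ => p b.1 r.1) ∘ e) = fun r : R => p b.1 r.1.1 := by
      funext r
      rfl
    have h1 : HasSum ((fun r : R₀ => p b.1 r.1) ∘ e) 1 := by rw [hco]; exact h0
    exact hasSum_subtype_iff_indicator.mp (e.hasSum_iff.mp h1)
  -- each element of C is orthogonal to every element of A^⊥
  have hCorth : ∀ c ∈ C, ∀ b ∈ orthoC p A, p b c = 0 := by
    intro c hc b hb
    have h1 := hindR' b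
    have h2 := hsumR₀ ⟨b, hb⟩
    have h3 : HasSum (C.indicator (p b)) 0 := by
      have := h1.sub h2
      simp only [sub_self] at this
      convert this using 1
      · rfl
      funext s
      rw [hunion, Set.indicator_union_of_disjoint hdisj]
      ring
    have h4 := le_hasSum h3 c (fun j _ => Set.indicator_nonneg (fun s _ => hnn b s) j)
    have h5 : C.indicator (p b) c = p b c := Set.indicator_of_mem hc _
    rw [h5] at h4
    exact le_antisymm h4 (hnn b c)
  have hCA : C ⊆ A := by
    intro c hc
    rw [hA]
    intro b hb
    rw [hsymm]
    exact hCorth c hc b hb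
  ext x
  simp only [Set.mem_setOf_eq]
  constructor
  · -- A ⊆ R^⊥
    intro hx r hr
    rw [hsymm]
    exact r.2 x hx
  · -- R^⊥ ⊆ A
    intro hx
    rw [hA]
    intro b hb
    -- x is orthogonal to all of R₀
    have hxR₀ : ∀ s ∈ R₀, p x s = 0 := by
      rintro s ⟨r, hr, rfl⟩
      exact hx r hr
    -- so sum of p x over C is 1
    have hxC : HasSum (C.indicator (p x)) 1 := by
      have h1 := hindR' x
      convert h1 using 1
      funext s
      rw [hunion, Set.indicator_union_of_disjoint hdisj]
      show C.indicator (p x) s = R₀.indicator (p x) s + C.indicator (p x) s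
      by_cases hs : s ∈ R₀
      · rw [Set.indicator_of_mem hs, hxR₀ s hs, zero_add]
      · rw [Set.indicator_of_notMem hs, zero_add]
    -- b ∉ C, and C ∪ {b} is orthogonal
    have hbC : b ∉ C := by
      intro h
      have := hCorth b h b hb
      rw [(heq1 b b).mpr rfl] at this
      norm_num at this
    have hCborth : IsOrthogonalSet p (C ∪ {b}) := by
      rintro a (ha | ha) a' (ha' | ha') haa'
      · exact hR'.1 a (hunion ▸ Set.mem_union_right _ ha) a'
          (hunion ▸ Set.mem_union_right _ ha') haa'
      · rw [Set.mem_singleton_iff] at ha'; subst ha'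
        rw [hsymm]; exact hb a (hCA ha)
      · rw [Set.mem_singleton_iff] at ha; subst ha
        exact hb a' (hCA ha')
      · rw [Set.mem_singleton_iff] at ha ha'; exact absurd (ha.trans ha'.symm) haa'
    obtain ⟨R'', hsubR'', hR''⟩ := exists_basis_extending p _ hCborth
    -- sum over C ∪ {b} of p x is 1 + p x b
    have hxCb : HasSum ((C ∪ {b}).indicator (p x)) (1 + p x b) := by
      have hdisj2 : Disjoint C ({b} : Set S) := by
        rw [Set.disjoint_singleton_right]; exact hbC
      rw [Set.indicator_union_of_disjoint hdisj2]
      refine hxC.add ?_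
      have : ({b} : Set S).indicator (p x) = fun a => if a = b then p x b else 0 := by
        funext a
        by_cases h : a = b
        · subst h; simp
        · simp [Set.indicator_of_notMem, h]
      rw [this]
      exact hasSum_ite_eq b (p x b)
    -- compare with sum over R''
    have hindR2 : HasSum (R''.indicator (p x)) 1 :=
      hasSum_subtype_iff_indicator.mp (hsum R'' hR'' x)
    have hle : 1 + p x b ≤ 1 := by
      refine hasSum_le (fun s => ?_) hxCb hindR2
      by_cases h : s ∈ C ∪ {b}
      · rw [Set.indicator_of_mem h, Set.indicator_of_mem (hsubR'' h)]
      · rw [Set.indicator_of_notMem h]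
        exact Set.indicator_nonneg (fun t _ => hnn x t) s
    have : p x b ≤ 0 := by linarith
    exact le_antisymm this (hnn x b)
end

section
/- Let E be a complex inner product space and ψ, φ ∈ E unit vectors. Let x, y : E → E be the rank-one projections x(v) = ⟨ψ,v⟩•ψ and y(v) = ⟨φ,v⟩•φ (inner product conjugate-linear in the first argument). Then (x − y)³ = (1 − |⟨ψ,φ⟩|²) • (x − y) as linear maps on E. -/
/-- For unit vectors `ψ, φ` in a complex inner product space, the rank-one
projections `x v = ⟨ψ,v⟩•ψ` and `y v = ⟨φ,v⟩•φ` satisfy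
`(x − y)³ = (1 − |⟨ψ,φ⟩|²) • (x − y)`. -/
theorem rankOne_diff_cube {E : Type*} [NormedAddCommGroup E]
    [InnerProductSpace ℂ E] (ψ φ : E) (hψ : ‖ψ‖ = 1) (hφ : ‖φ‖ = 1)
    (x y : Module.End ℂ E)
    (hx : ∀ v : E, x v = (inner ℂ ψ v : ℂ) • ψ)
    (hy : ∀ v : E, y v = (inner ℂ φ v : ℂ) • φ) :
    (x - y) ^ 3 = (((1 - ‖(inner ℂ ψ φ : ℂ)‖ ^ 2 : ℝ) : ℂ)) • (x - y) := by
  have h1 : (inner ℂ ψ ψ : ℂ) = 1 := by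
    rw [inner_self_eq_norm_sq_to_K, hψ]; norm_num
  have h2 : (inner ℂ φ φ : ℂ) = 1 := by
    rw [inner_self_eq_norm_sq_to_K, hφ]; norm_num
  have h3 : (inner ℂ φ ψ : ℂ) = starRingEnd ℂ (inner ℂ ψ φ) := by
    rw [inner_conj_symm]
  have h4 : ((‖(inner ℂ ψ φ : ℂ)‖ : ℝ) : ℂ) * ((‖(inner ℂ ψ φ : ℂ)‖ : ℝ) : ℂ)
      = starRingEnd ℂ (inner ℂ ψ φ) * inner ℂ ψ φ := by
    rw [Complex.conj_mul']
    ring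
  ext v
  simp only [pow_succ, pow_zero, one_mul, Module.End.mul_apply, LinearMap.sub_apply,
    LinearMap.smul_apply, hx, hy, inner_sub_right, inner_smul_right, h1, h2, h3,
    smul_smul, sub_smul, smul_sub]
  push_cast
  rw [h4]
  module
end

section
/- Let E be a complex inner product space and ψ₁, ψ₂ ∈ E unit vectors, with rank-one projections x₁(v) = ⟨ψ₁,v⟩•ψ₁ and x₂(v) = ⟨ψ₂,v⟩•ψ₂ regarded as continuous linear maps on E. Then the operator norm of their difference is ‖x₁ − x₂‖ = sqrt(1 − |⟨ψ₁,ψ₂⟩|²). -/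
/-- For unit vectors `ψ₁, ψ₂` in a complex inner ℂ product space, the operator norm of
the difference of the rank-one projections onto them is
`‖x₁ − x₂‖ = √(1 − |⟨ψ₁,ψ₂⟩|²)`. -/
theorem rankOne_diff_norm {E : Type*} [NormedAddCommGroup E]
    [InnerProductSpace ℂ E] (ψ₁ ψ₂ : E) (h₁ : ‖ψ₁‖ = 1) (h₂ : ‖ψ₂‖ = 1)
    (x₁ x₂ : E →L[ℂ] E)
    (hx₁ : ∀ v : E, x₁ v = (inner ℂ ψ₁ v : ℂ) • ψ₁)
    (hx₂ : ∀ v : E, x₂ v = (inner ℂ ψ₂ v : ℂ) • ψ₂) :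
    ‖x₁ - x₂‖ = Real.sqrt (1 - ‖(inner ℂ ψ₁ ψ₂ : ℂ)‖ ^ 2) := by
  set c : ℂ := inner ℂ ψ₁ ψ₂ with hc
  have hcle : ‖c‖ ≤ 1 := by
    simpa [h₁, h₂] using norm_inner_le_norm (𝕜 := ℂ) ψ₁ ψ₂
  have hp : (0:ℝ) ≤ 1 - ‖c‖^2 := by nlinarith [norm_nonneg c]
  set s : ℝ := Real.sqrt (1 - ‖c‖^2) with hs
  have hs2 : s^2 = 1 - ‖c‖^2 := Real.sq_sqrt hp
  have hs0 : 0 ≤ s := Real.sqrt_nonneg _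
  have hi11 : (inner ℂ ψ₁ ψ₁ : ℂ) = 1 := by
    rw [inner_self_eq_norm_sq_to_K, h₁]; norm_num
  have hi22 : (inner ℂ ψ₂ ψ₂ : ℂ) = 1 := by
    rw [inner_self_eq_norm_sq_to_K, h₂]; norm_num
  have hi21 : (inner ℂ ψ₂ ψ₁ : ℂ) = starRingEnd ℂ c := by
    rw [hc, inner_conj_symm]
  -- lower bound
  have happ : (x₁ - x₂) ψ₁ = ψ₁ - (starRingEnd ℂ c) • ψ₂ := by
    simp [hx₁, hx₂, hi11, hi21, h₁]
  have hnlow : ‖(x₁ - x₂) ψ₁‖ = s := by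
    rw [happ]
    have hin : (inner ℂ (ψ₁ - (starRingEnd ℂ c) • ψ₂) (ψ₁ - (starRingEnd ℂ c) • ψ₂) : ℂ)
        = ((1 - ‖c‖^2 : ℝ) : ℂ) := by
      simp only [inner_sub_left, inner_sub_right, inner_smul_left, inner_smul_right,
        hi11, hi22, hi21, ← hc]
      have : (starRingEnd ℂ) c * c = ((‖c‖^2 : ℝ) : ℂ) := by
        rw [Complex.conj_mul']; push_cast; ring
      simp only [Complex.conj_conj]
      push_cast at this ⊢
      linear_combination -this
    rw [@norm_eq_sqrt_re_inner ℂ, hin, RCLike.re_to_complex, Complex.ofReal_re]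
  have hlow : s ≤ ‖x₁ - x₂‖ := by
    calc s = ‖(x₁ - x₂) ψ₁‖ := hnlow.symm
      _ ≤ ‖x₁ - x₂‖ * ‖ψ₁‖ := (x₁ - x₂).le_opNorm ψ₁
      _ = ‖x₁ - x₂‖ := by rw [h₁, mul_one]
  refine le_antisymm ?_ hlow
  by_cases hc1 : ‖c‖ = 1
  · -- Cauchy-Schwarz equality: projections coincide
    have hψ₁0 : ψ₁ ≠ 0 := by intro h; rw [h, norm_zero] at h₁; norm_num at h₁
    have hψ₂0 : ψ₂ ≠ 0 := by intro h; rw [h, norm_zero] at h₂; norm_num at h₂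
    obtain ⟨r, hr0, hrψ⟩ := (norm_inner_eq_norm_iff (𝕜 := ℂ) hψ₁0 hψ₂0).1
      (by rw [← hc, h₁, h₂, hc1]; norm_num)
    have hrn : ‖r‖ = 1 := by
      have := h₂
      rw [hrψ, norm_smul, h₁, mul_one] at this
      exact this
    have hr1 : (starRingEnd ℂ) r * r = 1 := by
      rw [Complex.conj_mul']
      rw [hrn]
      norm_num
    have hx : x₁ = x₂ := by
      ext v
      rw [hx₁, hx₂, hrψ, inner_smul_left, smul_smul]
      congr 1
      linear_combination -(inner ℂ ψ₁ v : ℂ) * hr1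
    rw [hx, sub_self, norm_zero]
    exact hs0
  · have hclt : ‖c‖ < 1 := lt_of_le_of_ne hcle hc1
    have hspos : 0 < s := Real.sqrt_pos.2 (by nlinarith [norm_nonneg c])
    set w : E := ψ₂ - c • ψ₁ with hw
    have hiww : (inner ℂ w w : ℂ) = ((s^2 : ℝ) : ℂ) := by
      rw [hw]
      simp only [inner_sub_left, inner_sub_right, inner_smul_left, inner_smul_right,
        hi11, hi22, hi21, ← hc]
      have hthis : (starRingEnd ℂ) c * c = ((‖c‖^2 : ℝ) : ℂ) := by
        rw [Complex.conj_mul']; push_cast; ring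
      rw [hs2]
      push_cast at hthis ⊢
      linear_combination -hthis
    have hnw : ‖w‖ = s := by
      rw [@norm_eq_sqrt_re_inner ℂ, hiww, RCLike.re_to_complex, Complex.ofReal_re,
        Real.sqrt_sq hs0]
    set φ : E := ((s : ℂ))⁻¹ • w with hφ
    have hnφ : ‖φ‖ = 1 := by
      rw [hφ, norm_smul, hnw, norm_inv, Complex.norm_real, Real.norm_of_nonneg hs0]
      field_simp
    have hi1φ : (inner ℂ ψ₁ φ : ℂ) = 0 := by
      rw [hφ, inner_smul_right, hw, inner_sub_right, inner_smul_right, hi11, ← hc]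
      ring
    have hiφ1 : (inner ℂ φ ψ₁ : ℂ) = 0 := by
      rw [← inner_conj_symm, hi1φ]; simp
    have hψ₂eq : ψ₂ = c • ψ₁ + (s : ℂ) • φ := by
      rw [hφ, smul_smul, mul_inv_cancel₀ (by exact_mod_cast hspos.ne'), one_smul, hw]
      abel
    -- orthonormal pair for Bessel
    have horth : Orthonormal ℂ ![ψ₁, φ] := by
      rw [orthonormal_iff_ite]
      intro i j
      fin_cases i <;> fin_cases j <;>
        simp [hi11, hi1φ, hiφ1, inner_self_eq_norm_sq_to_K, hnφ, h₁]
    refine (x₁ - x₂).opNorm_le_bound hs0 (fun v => ?_)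
    set a : ℂ := inner ℂ ψ₁ v with ha
    set u : ℂ := inner ℂ φ v with hu
    have hb : (inner ℂ ψ₂ v : ℂ) = (starRingEnd ℂ) c * a + (s : ℂ) * u := by
      conv_lhs => rw [hψ₂eq]
      rw [inner_add_left, inner_smul_left, inner_smul_left, ← ha, ← hu]
      congr 1
      rw [Complex.conj_ofReal]
    have happv : (x₁ - x₂) v = a • ψ₁ - (inner ℂ ψ₂ v : ℂ) • ψ₂ := by
      simp [hx₁, hx₂, ha]
    have hcc : (starRingEnd ℂ) c * c = 1 - ((s : ℂ))^2 := by
      have h' : (starRingEnd ℂ) c * c = ((‖c‖^2 : ℝ) : ℂ) := by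
        rw [Complex.conj_mul']; push_cast; ring
      have h2' : (‖c‖^2 : ℝ) = 1 - s^2 := by rw [hs2]; ring
      rw [h', h2']
      push_cast
      ring
    have hinww : (inner ℂ ((x₁ - x₂) v) ((x₁ - x₂) v) : ℂ)
        = ((s:ℂ))^2 * ((starRingEnd ℂ) a * a + (starRingEnd ℂ) u * u) := by
      rw [happv, hb]
      simp only [inner_sub_left, inner_sub_right, inner_smul_left, inner_smul_right,
        hi11, hi22, hi21, ← hc, map_add, map_mul, Complex.conj_conj, Complex.conj_ofReal]
      linear_combination (-((starRingEnd ℂ) a * a)) * hcc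
    have haa : (starRingEnd ℂ) a * a = ((‖a‖^2 : ℝ) : ℂ) := by
      rw [Complex.conj_mul']; push_cast; ring
    have huu : (starRingEnd ℂ) u * u = ((‖u‖^2 : ℝ) : ℂ) := by
      rw [Complex.conj_mul']; push_cast; ring
    have hbessel : ‖a‖^2 + ‖u‖^2 ≤ ‖v‖^2 := by
      have := horth.sum_inner_products_le v (s := Finset.univ)
      simpa [Fin.sum_univ_two, ← ha, ← hu] using this
    have hnormv : ‖(x₁ - x₂) v‖ = s * Real.sqrt (‖a‖^2 + ‖u‖^2) := by
      rw [@norm_eq_sqrt_re_inner ℂ, hinww, haa, huu]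
      have : ((s:ℂ))^2 * (((‖a‖^2 : ℝ):ℂ) + ((‖u‖^2 : ℝ):ℂ))
          = ((s^2 * (‖a‖^2 + ‖u‖^2) : ℝ) : ℂ) := by push_cast; ring
      rw [this, RCLike.re_to_complex, Complex.ofReal_re,
        Real.sqrt_mul (sq_nonneg s), Real.sqrt_sq hs0]
    rw [hnormv]
    have : Real.sqrt (‖a‖^2 + ‖u‖^2) ≤ ‖v‖ := by
      have h := Real.sqrt_le_sqrt hbessel
      rwa [Real.sqrt_sq (norm_nonneg v)] at h
    exact mul_le_mul_of_nonneg_left this hs0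
end

section
/- Let S be a set, R ⊆ S, and A : S → S → ℂ a hermitian transition amplitude for which R is an A-set, i.e.: A(a,a) = 1 for all a; A(a,b) = conj(A(b,a)) for all a,b; and for all a,b ∈ S the family (|A(a,r)·A(r,b)|)_{r∈R} is summable and the family (A(a,r)·A(r,b))_{r∈R} is summable with sum A(a,b). Then |A(a,b)| ≤ 1 for all a,b ∈ S. -/
/-- For a hermitian transition amplitude `A` admitting an `A`-set `R`
(i.e. `A(a,a) = 1`, `A(a,b) = conj (A(b,a))`, the families
`(|A(a,r)·A(r,b)|)_{r∈R}` are summable and `(A(a,r)·A(r,b))_{r∈R}` sums to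
`A(a,b)`), one has `|A(a,b)| ≤ 1` for all `a, b`. -/
theorem amplitude_abs_le_one {S : Type*} (A : S → S → ℂ) (R : Set S)
    (hdiag : ∀ a : S, A a a = 1)
    (hherm : ∀ a b : S, A a b = (starRingEnd ℂ) (A b a))
    (hsummable : ∀ a b : S, Summable (fun r : R => ‖A a r.1 * A r.1 b‖))
    (hAset : ∀ a b : S, HasSum (fun r : R => A a r.1 * A r.1 b) (A a b)) :
    ∀ a b : S, ‖A a b‖ ≤ 1 := by
  -- key: for each a, ∑_{r∈R} ‖A a r‖² = 1
  have key : ∀ a : S, HasSum (fun r : R => ‖A a r.1‖ ^ 2) 1 := by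
    intro a
    have h := hAset a a
    rw [hdiag a] at h
    have heq : (fun r : R => A a r.1 * A r.1 a)
        = fun r : R => ((‖A a r.1‖ ^ 2 : ℝ) : ℂ) := by
      funext r
      rw [hherm r.1 a, Complex.mul_conj']
      push_cast
      ring
    rw [heq, show (1:ℂ) = ((1:ℝ):ℂ) by norm_num] at h
    exact Complex.hasSum_ofReal.mp h
  intro a b
  have hs := hsummable a b
  have hle : ‖A a b‖ ≤ ∑' r : R, ‖A a r.1 * A r.1 b‖ :=
    (hAset a b).tsum_eq ▸ norm_tsum_le_tsum_norm hs
  have hsum2 : Summable (fun r : R => (‖A a r.1‖ ^ 2 + ‖A r.1 b‖ ^ 2) / 2) := by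
    have hb : ∀ r : S, ‖A r b‖ = ‖A b r‖ := by
      intro r; rw [hherm b r]; simp
    have h2 : Summable (fun r : R => ‖A r.1 b‖ ^ 2) := by
      simpa [hb] using (key b).summable
    exact (((key a).summable.add h2).div_const 2)
  have hle2 : ∑' r : R, ‖A a r.1 * A r.1 b‖
      ≤ ∑' r : R, (‖A a r.1‖ ^ 2 + ‖A r.1 b‖ ^ 2) / 2 := by
    apply Summable.tsum_le_tsum _ hs hsum2
    intro r
    rw [norm_mul]
    nlinarith [sq_nonneg (‖A a r.1‖ - ‖A r.1 b‖), norm_nonneg (A a r.1),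
      norm_nonneg (A r.1 b)]
  have hval : ∑' r : R, (‖A a r.1‖ ^ 2 + ‖A r.1 b‖ ^ 2) / 2 = 1 := by
    have hb : ∀ r : S, ‖A r b‖ = ‖A b r‖ := by
      intro r; rw [hherm b r]; simp
    have h2 : HasSum (fun r : R => ‖A r.1 b‖ ^ 2) 1 := by
      simpa [hb] using key b
    have := ((key a).add h2).div_const 2
    rw [this.tsum_eq]; norm_num
  linarith
end

section
/- Let S be a set and A : S → S → ℂ a hermitian transition amplitude (A(a,a) = 1 and A(a,b) = conj(A(b,a)) for all a,b) that is strong in the sense that |A(a,b)| = 1 implies a = b, and total in the sense that there is an A-set R ⊆ S which is a basis: distinct elements r ≠ r' of R satisfy A(r,r') = 0 and R is maximal among subsets whose distinct elements have vanishing amplitude. Define p(a,b) = |A(a,b)|². Then: (1) 0 ≤ p(a,b) ≤ 1 and p(a,b) = 1 if and only if a = b; (2) p(a,b) = p(b,a); (3) R is a maximal pairwise p-orthogonal subset of S and for every a ∈ S the family (p(a,r))_{r∈R} is summable with sum 1. Hence (S, |A|²) is a transition probability space. -/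
/-- A subset whose distinct elements have vanishing amplitude. -/
def IsAmpOrthSet {S : Type*} (A : S → S → ℂ) (R : Set S) : Prop :=
  ∀ a ∈ R, ∀ b ∈ R, a ≠ b → A a b = 0

/-- For a strong, total hermitian transition amplitude space `(S,A)`,
`p(a,b) = |A(a,b)|²` makes `(S,p)` a transition probability space: `0 ≤ p ≤ 1`
with `p(a,b) = 1` iff `a = b`, `p` is symmetric, and the amplitude basis `R` is a
maximal pairwise `p`-orthogonal subset over which `(p(a,r))_{r∈R}` sums to `1`. -/
theorem amplitude_space_gives_tps {S : Type*} (A : S → S → ℂ)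
    (hdiag : ∀ a : S, A a a = 1)
    (hherm : ∀ a b : S, A a b = (starRingEnd ℂ) (A b a))
    (hstrong : ∀ a b : S, ‖A a b‖ = 1 → a = b)
    (R : Set S)
    (hsummable : ∀ a b : S, Summable (fun r : R => ‖A a r.1 * A r.1 b‖))
    (hAset : ∀ a b : S, HasSum (fun r : R => A a r.1 * A r.1 b) (A a b))
    (hRorth : IsAmpOrthSet A R)
    (hRmax : ∀ T : Set S, R ⊆ T → IsAmpOrthSet A T → T = R) :
    (∀ a b : S, 0 ≤ ‖A a b‖ ^ 2 ∧ ‖A a b‖ ^ 2 ≤ 1 ∧ (‖A a b‖ ^ 2 = 1 ↔ a = b)) ∧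
    (∀ a b : S, ‖A a b‖ ^ 2 = ‖A b a‖ ^ 2) ∧
    IsBasisTPS (fun a b : S => ‖A a b‖ ^ 2) R ∧
    (∀ a : S, HasSum (fun r : R => ‖A a r.1‖ ^ 2) 1) := by
  have hnsymm : ∀ a b : S, ‖A a b‖ = ‖A b a‖ := by
    intro a b; rw [hherm a b, RCLike.norm_conj]
  -- squares sum to 1
  have hsq : ∀ a : S, HasSum (fun r : R => ‖A a r.1‖ ^ 2) 1 := by
    intro a
    have h := hAset a a
    rw [hdiag a] at h
    have heq : (fun r : R => A a r.1 * A r.1 a) =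
        fun r : R => ((‖A a r.1‖ ^ 2 : ℝ) : ℂ) := by
      funext r
      rw [hherm r.1 a, Complex.mul_conj]
      norm_cast
      rw [Complex.normSq_eq_norm_sq]
    rw [heq] at h
    have h' : HasSum (fun r : R => ((‖A a r.1‖ ^ 2 : ℝ) : ℂ)) ((1 : ℝ) : ℂ) := by
      simpa using h
    exact Complex.hasSum_ofReal.mp h'
  have hle1 : ∀ a b : S, ‖A a b‖ ≤ 1 := by
    intro a b
    have hs := hsummable a b
    have h1 : ‖A a b‖ ≤ ∑' r : R, ‖A a r.1 * A r.1 b‖ := by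
      rw [← (hAset a b).tsum_eq]
      exact norm_tsum_le_tsum_norm hs
    have h2 : (∑' r : R, ‖A a r.1 * A r.1 b‖) ≤ 1 := by
      refine Summable.tsum_le_of_sum_le hs ?_
      intro s
      have hcs := Finset.sum_mul_sq_le_sq_mul_sq s (fun r : R => ‖A a r.1‖)
        (fun r : R => ‖A r.1 b‖)
      have hpa : ∑ r ∈ s, ‖A a r.1‖ ^ 2 ≤ 1 :=
        sum_le_hasSum s (fun i _ => sq_nonneg _) (hsq a)
      have hpb : ∑ r ∈ s, ‖A r.1 b‖ ^ 2 ≤ 1 := by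
        calc ∑ r ∈ s, ‖A r.1 b‖ ^ 2 = ∑ r ∈ s, ‖A b r.1‖ ^ 2 :=
              Finset.sum_congr rfl fun r _ => by rw [hnsymm]
          _ ≤ 1 := sum_le_hasSum s (fun i _ => sq_nonneg _) (hsq b)
      have hnn : (0 : ℝ) ≤ ∑ r ∈ s, ‖A a r.1‖ * ‖A r.1 b‖ :=
        Finset.sum_nonneg fun i _ => mul_nonneg (norm_nonneg _) (norm_nonneg _)
      have : ∀ r : R, ‖A a r.1 * A r.1 b‖ = ‖A a r.1‖ * ‖A r.1 b‖ :=
        fun r => norm_mul _ _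
      rw [Finset.sum_congr rfl fun r _ => this r]
      nlinarith [mul_le_one₀ hpa (Finset.sum_nonneg
        (fun (i : R) (_ : i ∈ s) => sq_nonneg ‖A i.1 b‖)) hpb]
    linarith
  have hzero_iff : ∀ a b : S, ‖A a b‖ ^ 2 = 0 ↔ A a b = 0 := by
    intro a b
    constructor
    · intro h
      have : ‖A a b‖ = 0 := by nlinarith [norm_nonneg (A a b)]
      exact norm_eq_zero.mp this
    · intro h; rw [h]; simp
  refine ⟨?_, ?_, ⟨?_, ?_⟩, hsq⟩
  · intro a b
    refine ⟨sq_nonneg _, ?_, ?_, ?_⟩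
    · have := hle1 a b
      nlinarith [norm_nonneg (A a b)]
    · intro h
      refine hstrong a b ?_
      nlinarith [norm_nonneg (A a b)]
    · rintro rfl
      rw [hdiag a]; simp
  · intro a b; rw [hnsymm]
  · intro a ha b hb hab
    simp only []
    rw [hRorth a ha b hb hab]; simp
  · intro T hRT hT
    refine hRmax T hRT ?_
    intro a ha b hb hab
    exact (hzero_iff a b).mp (hT a ha b hb hab)
end
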